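/- Let N ≥ 2, d ≥ 1 be integers, ρ_c := d·(N-1)/(N+1), and ρ_c < ρ ≤ 2. Then there exists κ₀ > 0 such that for all κ ∈ (0,κ₀) for which α₀/ρ is irrational, where α₀ := -(ρ+d)/2 - κ, the homogeneity counting number h_F := card({α₀} ∪ {h ∈ ℝ : h < 0 and h = p·α₀ + q·ρ + r·ρ + s for some integers p ≥ 1, q ≥ 1, r ≥ 0, s ≥ 0 with N·p ≤ N + (N-1)·q}) satisfies ((ρ+d)/(N+1))·(ρ - ρ_c)^{-1} ≤ h_F ≤ 1 + ((ρ+d)·d·N/(N+1))·(ρ - ρ_c)^{-1}. -/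
import Mathlib


/-- The set of negative homogeneities of the model space for the fractional
Allen–Cahn equation with space-time white noise: the homogeneity `α₀ = -(ρ+d)/2 - κ`
of `Ξ`, together with all negative values `p α₀ + q ρ + r ρ + s` with `p ≥ 1`,
`q ≥ 1`, `N p ≤ N + (N-1) q` and polynomial decorations `r, s ≥ 0`. -/
def negHomogSet (N d : ℕ) (ρ κ : ℝ) : Set ℝ :=
  {-(ρ + (d : ℝ)) / 2 - κ} ∪
    {h | h < 0 ∧ ∃ p q r s : ℕ, 1 ≤ p ∧ 1 ≤ q ∧ N * p ≤ N + (N - 1) * q ∧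
      h = (p : ℝ) * (-(ρ + (d : ℝ)) / 2 - κ) + (q : ℝ) * ρ + (r : ℝ) * ρ + (s : ℝ)}

/-- Bounds on the homogeneity counting map `h_F(N,d,ρ)` for `ρ_c < ρ ≤ 2`:
for all sufficiently small `κ > 0` such that `α₀/ρ` is irrational,
`(ρ+d)/(N+1) · (ρ-ρ_c)⁻¹ ≤ h_F ≤ 1 + (ρ+d) d N/(N+1) · (ρ-ρ_c)⁻¹`,
where `ρ_c = d(N-1)/(N+1)`. -/
theorem hF_bounds (N d : ℕ) (hN : 2 ≤ N) (hd : 1 ≤ d) (ρ : ℝ)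
    (hρc : (d : ℝ) * ((N : ℝ) - 1) / ((N : ℝ) + 1) < ρ) (hρ2 : ρ ≤ 2) :
    ∃ κ₀ > (0 : ℝ), ∀ κ : ℝ, 0 < κ → κ < κ₀ →
      Irrational ((-(ρ + (d : ℝ)) / 2 - κ) / ρ) →
        (ρ + (d : ℝ)) / ((N : ℝ) + 1)
            * (ρ - (d : ℝ) * ((N : ℝ) - 1) / ((N : ℝ) + 1))⁻¹
          ≤ (Nat.card (negHomogSet N d ρ κ) : ℝ)
        ∧ (Nat.card (negHomogSet N d ρ κ) : ℝ)
          ≤ 1 + (ρ + (d : ℝ)) * (d : ℝ) * (N : ℝ) / ((N : ℝ) + 1)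
              * (ρ - (d : ℝ) * ((N : ℝ) - 1) / ((N : ℝ) + 1))⁻¹ := by
  classical
  have hN1 : 1 ≤ N := le_trans one_le_two hN
  have hn2 : (2 : ℝ) ≤ (N : ℝ) := by exact_mod_cast hN
  have hD1 : (1 : ℝ) ≤ (d : ℝ) := by exact_mod_cast hd
  have hNsub : ((N - 1 : ℕ) : ℝ) = (N : ℝ) - 1 := by
    push_cast [Nat.cast_sub hN1]; ring
  have hn1pos : (0 : ℝ) < (N : ℝ) + 1 := by linarith
  have hnpos : (0 : ℝ) < (N : ℝ) := by linarith
  -- the subcriticality gap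
  obtain ⟨β, hβdef⟩ : ∃ β : ℝ, β = ρ - (d : ℝ) * ((N : ℝ) - 1) / ((N : ℝ) + 1) := ⟨_, rfl⟩
  have hβ : 0 < β := by rw [hβdef]; linarith
  have hρpos : 0 < ρ := by
    have h1 : 0 < (d : ℝ) * ((N : ℝ) - 1) / ((N : ℝ) + 1) :=
      div_pos (mul_pos (by linarith) (by linarith)) hn1pos
    linarith
  obtain ⟨A₀, hA₀def⟩ : ∃ A₀ : ℝ, A₀ = (ρ + (d : ℝ)) / 2 := ⟨_, rfl⟩
  have hA₀ : 0 < A₀ := by rw [hA₀def]; linarith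
  obtain ⟨ν₀, hν₀def⟩ : ∃ ν₀ : ℝ, ν₀ = (N : ℝ) * ρ - ((N : ℝ) - 1) * A₀ := ⟨_, rfl⟩
  have hν₀β : ν₀ = ((N : ℝ) + 1) * β / 2 := by
    rw [hν₀def, hβdef, hA₀def]
    field_simp
    ring
  have hν₀ : 0 < ν₀ := by rw [hν₀β]; positivity
  obtain ⟨M, hMdef⟩ : ∃ M : ℕ, M = ⌊(N : ℝ) * A₀ / ν₀⌋₊ := ⟨_, rfl⟩
  have hMle : (M : ℝ) ≤ (N : ℝ) * A₀ / ν₀ := by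
    rw [hMdef]; exact Nat.floor_le (by positivity)
  have hMlt : (N : ℝ) * A₀ / ν₀ < (M : ℝ) + 1 := by
    rw [hMdef]; exact Nat.lt_floor_add_one _
  obtain ⟨δ, hδdef⟩ : ∃ δ : ℝ, δ = ((M : ℝ) + 1) * ν₀ - (N : ℝ) * A₀ := ⟨_, rfl⟩
  have hδ : 0 < δ := by
    have h1 : (N : ℝ) * A₀ < ((M : ℝ) + 1) * ν₀ := (div_lt_iff₀ hν₀).mp hMlt
    rw [hδdef]; linarith
  have hMnn : (0 : ℝ) ≤ (M : ℝ) := Nat.cast_nonneg M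
  have hden3 : (0 : ℝ) < ((M : ℝ) + 1) * ((N : ℝ) - 1) + (N : ℝ) := by
    have h := mul_nonneg (by linarith : (0:ℝ) ≤ (M:ℝ)+1) (by linarith : (0:ℝ) ≤ (N:ℝ)-1)
    linarith
  refine ⟨min (min (ν₀ / (2 * ((N : ℝ) - 1))) (((d : ℝ) + ρ) / (4 * (2 * (N : ℝ) - 1))))
      (δ / (((M : ℝ) + 1) * ((N : ℝ) - 1) + (N : ℝ))), ?_, ?_⟩
  · have h1 : (0 : ℝ) < ν₀ / (2 * ((N : ℝ) - 1)) := div_pos hν₀ (by linarith)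
    have h2 : (0 : ℝ) < ((d : ℝ) + ρ) / (4 * (2 * (N : ℝ) - 1)) :=
      div_pos (by linarith) (by linarith)
    have h3 : (0 : ℝ) < δ / (((M : ℝ) + 1) * ((N : ℝ) - 1) + (N : ℝ)) := div_pos hδ hden3
    exact lt_min (lt_min h1 h2) h3
  intro κ hκ hκlt _
  have hκ1 : κ * (2 * ((N : ℝ) - 1)) < ν₀ :=
    (lt_div_iff₀ (by linarith)).mp
      (lt_of_lt_of_le hκlt (le_trans (min_le_left _ _) (min_le_left _ _)))
  have hκ2 : κ * (4 * (2 * (N : ℝ) - 1)) < (d : ℝ) + ρ :=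
    (lt_div_iff₀ (by linarith)).mp
      (lt_of_lt_of_le hκlt (le_trans (min_le_left _ _) (min_le_right _ _)))
  have hκ3 : κ * (((M : ℝ) + 1) * ((N : ℝ) - 1) + (N : ℝ)) < δ :=
    (lt_div_iff₀ hden3).mp (lt_of_lt_of_le hκlt (min_le_right _ _))
  rw [hδdef] at hκ3
  obtain ⟨A, hAdef⟩ : ∃ A : ℝ, A = (ρ + (d : ℝ)) / 2 + κ := ⟨_, rfl⟩
  have hA : 0 < A := by rw [hAdef]; linarith
  have hα : -(ρ + (d : ℝ)) / 2 - κ = -A := by rw [hAdef]; ring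
  obtain ⟨ν, hνdef⟩ : ∃ ν : ℝ, ν = (N : ℝ) * ρ - ((N : ℝ) - 1) * A := ⟨_, rfl⟩
  have hνν₀ : ν = ν₀ - ((N : ℝ) - 1) * κ := by
    rw [hνdef, hν₀def, hAdef, hA₀def]; ring
  have hν : 0 < ν := by rw [hνν₀]; linarith
  have hAA₀ : A = A₀ + κ := by rw [hAdef, hA₀def]
  -- key inequality (b): N*A - ν ≤ N*d
  have hb : (N : ℝ) * A - ν ≤ (N : ℝ) * (d : ℝ) := by
    rw [hνν₀, hAA₀, hν₀def, hA₀def]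
    linarith
  -- key inequality (c): if M < m then N*A ≤ m*ν
  have hc : ∀ m : ℕ, M < m → (N : ℝ) * A ≤ (m : ℝ) * ν := by
    intro m hm
    have hm' : (M : ℝ) + 1 ≤ (m : ℝ) := by exact_mod_cast hm
    have h1 : ((M : ℝ) + 1) * ν ≤ (m : ℝ) * ν :=
      mul_le_mul_of_nonneg_right hm' hν.le
    have h2 : (N : ℝ) * A ≤ ((M : ℝ) + 1) * ν := by
      rw [hνν₀, hAA₀]
      linarith [hκ3]
    linarith
  -- the negative part of the set
  obtain ⟨Neg, hNegdef⟩ : ∃ Neg : Set ℝ, Neg = {h : ℝ | h < 0 ∧ ∃ p q r s : ℕ, 1 ≤ p ∧ 1 ≤ q ∧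
      N * p ≤ N + (N - 1) * q ∧
      h = (p : ℝ) * (-A) + (q : ℝ) * ρ + (r : ℝ) * ρ + (s : ℝ)} := ⟨_, rfl⟩
  have hS : negHomogSet N d ρ κ = {-A} ∪ Neg := by
    rw [negHomogSet, hα, hNegdef]
  -- representation lemma
  have rep : ∀ h ∈ Neg, ∃ p m s : ℕ, 1 ≤ m ∧ m ≤ M ∧ s < d ∧
      (N : ℝ) * (p : ℝ) ≤ (N : ℝ) + ((N : ℝ) - 1) * (m : ℝ) ∧
      (m : ℝ) * ρ + (s : ℝ) < (p : ℝ) * A ∧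
      h = -((p : ℝ) * A) + (m : ℝ) * ρ + (s : ℝ) := by
    rw [hNegdef]
    rintro h ⟨hneg, p, q, r, s, hp, hq, hcon, heq⟩
    have hm1 : 1 ≤ q + r := le_trans hq (Nat.le_add_right q r)
    have hm1' : (1 : ℝ) ≤ ((q + r : ℕ) : ℝ) := by exact_mod_cast hm1
    have hr0 : (0 : ℝ) ≤ ((N : ℝ) - 1) * (r : ℝ) :=
      mul_nonneg (by linarith) (Nat.cast_nonneg r)
    have hcon' : (N : ℝ) * (p : ℝ) ≤ (N : ℝ) + ((N : ℝ) - 1) * ((q + r : ℕ) : ℝ) := by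
      have h1 : ((N * p : ℕ) : ℝ) ≤ ((N + (N - 1) * q : ℕ) : ℝ) := by exact_mod_cast hcon
      push_cast [hNsub] at h1 ⊢
      linarith
    have heq' : h = -((p : ℝ) * A) + ((q + r : ℕ) : ℝ) * ρ + (s : ℝ) := by
      rw [heq]; push_cast; ring
    have hlt : ((q + r : ℕ) : ℝ) * ρ + (s : ℝ) < (p : ℝ) * A := by
      rw [heq'] at hneg; linarith
    have hs0 : (0 : ℝ) ≤ (s : ℝ) := Nat.cast_nonneg s
    have h1 : (N : ℝ) * (((q + r : ℕ) : ℝ) * ρ + (s : ℝ)) < (N : ℝ) * ((p : ℝ) * A) :=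
      mul_lt_mul_of_pos_left hlt hnpos
    have h2 : (N : ℝ) * (p : ℝ) * A ≤ ((N : ℝ) + ((N : ℝ) - 1) * ((q + r : ℕ) : ℝ)) * A :=
      mul_le_mul_of_nonneg_right hcon' hA.le
    have hNs : (0 : ℝ) ≤ (N : ℝ) * (s : ℝ) := mul_nonneg hnpos.le hs0
    -- m * ν < N * A
    have hmν : ((q + r : ℕ) : ℝ) * ν < (N : ℝ) * A := by
      rw [hνdef]
      linarith [h1, h2, hNs]
    have hmM : q + r ≤ M := by
      by_contra hcontra
      have := hc (q + r) (Nat.lt_of_not_le (fun hle => hcontra hle))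
      linarith
    have hsd : s < d := by
      have hνm : ν ≤ ((q + r : ℕ) : ℝ) * ν := le_mul_of_one_le_left hν.le hm1'
      rw [hνdef] at hνm
      have hbb : (N : ℝ) * A - ((N : ℝ) * ρ - ((N : ℝ) - 1) * A) ≤ (N : ℝ) * (d : ℝ) := by
        rw [← hνdef]; exact hb
      have hNsd : (N : ℝ) * (s : ℝ) < (N : ℝ) * (d : ℝ) := by linarith [h1, h2, hνm, hbb]
      have : (s : ℝ) < (d : ℝ) := lt_of_mul_lt_mul_left hNsd hnpos.le
      exact_mod_cast this
    exact ⟨p, q + r, s, hm1, hmM, hsd, hcon', hlt, heq'⟩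
  -- uniqueness of p given (m, s)
  have punique : ∀ p₁ p₂ m s : ℕ, 1 ≤ m →
      (N : ℝ) * (p₁ : ℝ) ≤ (N : ℝ) + ((N : ℝ) - 1) * (m : ℝ) →
      (N : ℝ) * (p₂ : ℝ) ≤ (N : ℝ) + ((N : ℝ) - 1) * (m : ℝ) →
      (m : ℝ) * ρ + (s : ℝ) < (p₁ : ℝ) * A →
      (m : ℝ) * ρ + (s : ℝ) < (p₂ : ℝ) * A → p₁ = p₂ := by
    have key : ∀ pa pb m s : ℕ, 1 ≤ m →
        (N : ℝ) * (pa : ℝ) ≤ (N : ℝ) + ((N : ℝ) - 1) * (m : ℝ) →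
        (m : ℝ) * ρ + (s : ℝ) < (pb : ℝ) * A → pa < pb + 1 := by
      intro pa pb m s hm hconpa hltpb
      have hm' : (1 : ℝ) ≤ (m : ℝ) := by exact_mod_cast hm
      have hs0 : (0 : ℝ) ≤ (s : ℝ) := Nat.cast_nonneg s
      have hνm : ν ≤ (m : ℝ) * ν := le_mul_of_one_le_left hν.le hm'
      rw [hνdef] at hνm
      have hνpos : (0 : ℝ) < (N : ℝ) * ρ - ((N : ℝ) - 1) * A := by rw [← hνdef]; exact hν
      have h2 : (N : ℝ) * (pa : ℝ) * A ≤ ((N : ℝ) + ((N : ℝ) - 1) * (m : ℝ)) * A :=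
        mul_le_mul_of_nonneg_right hconpa hA.le
      have h1 : (N : ℝ) * ((m : ℝ) * ρ + (s : ℝ)) < (N : ℝ) * ((pb : ℝ) * A) :=
        mul_lt_mul_of_pos_left hltpb hnpos
      have hr : (pa : ℝ) < (pb : ℝ) + 1 := by
        have hNA : 0 < (N : ℝ) * A := by positivity
        rw [← mul_lt_mul_iff_right₀ hNA]
        have hNs : (0 : ℝ) ≤ (N : ℝ) * (s : ℝ) := mul_nonneg hnpos.le hs0
        linarith [h1, h2, hνm, hνpos, hNs]
      exact_mod_cast hr
    intro p₁ p₂ m s hm h1 h2 h3 h4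
    have ha := key p₁ p₂ m s hm h1 h4
    have hb' := key p₂ p₁ m s hm h2 h3
    omega
  -- choice functions
  choose! pf mf sf hmf1 hmfM hsfd hconf hltf heqf using rep
  have hmaps : ∀ h ∈ Neg, (mf h, sf h) ∈
      ((Finset.Icc 1 M ×ˢ Finset.range d : Finset (ℕ × ℕ)) : Set (ℕ × ℕ)) := by
    intro h hh
    rw [Finset.mem_coe, Finset.mem_product, Finset.mem_Icc, Finset.mem_range]
    exact ⟨⟨hmf1 h hh, hmfM h hh⟩, hsfd h hh⟩
  have hinj : Set.InjOn (fun h => (mf h, sf h)) Neg := by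
    intro a ha b hb hab
    simp only [Prod.mk.injEq] at hab
    obtain ⟨hm, hs⟩ := hab
    have hpab : pf a = pf b := by
      apply punique (pf a) (pf b) (mf a) (sf a) (hmf1 a ha) (hconf a ha)
      · rw [hm]; exact hconf b hb
      · exact hltf a ha
      · rw [hm, hs]; exact hltf b hb
    rw [heqf a ha, heqf b hb, hpab, hm, hs]
  have hNegFin : Neg.Finite := by
    apply Set.Finite.of_finite_image _ hinj
    exact Set.Finite.subset (Finset.finite_toSet _) (Set.image_subset_iff.mpr hmaps)
  have hNegCard : Neg.ncard ≤ M * d := by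
    have h1 := Set.ncard_le_ncard_of_injOn _ hmaps hinj (Finset.finite_toSet _)
    rwa [Set.ncard_coe_finset, Finset.card_product, Nat.card_Icc, Finset.card_range,
      Nat.add_sub_cancel] at h1
  have hSfin : (negHomogSet N d ρ κ).Finite := by
    rw [hS]; exact (Set.finite_singleton _).union hNegFin
  have hScard_le : (negHomogSet N d ρ κ).ncard ≤ 1 + M * d := by
    rw [hS]
    calc ({-A} ∪ Neg).ncard ≤ ({-A} : Set ℝ).ncard + Neg.ncard := Set.ncard_union_le _ _
    _ ≤ 1 + M * d := by rw [Set.ncard_singleton]; omega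
  -- lower bound: the chain
  obtain ⟨K, hKdef⟩ : ∃ K : ℕ, K = ⌈A / ν⌉₊ := ⟨_, rfl⟩
  have himg : (fun m : ℕ => -A + (m : ℝ) * ν) '' ((Finset.range K : Finset ℕ) : Set ℕ)
      ⊆ negHomogSet N d ρ κ := by
    rintro _ ⟨m, hm, rfl⟩
    simp only [Finset.coe_range, Set.mem_Iio] at hm
    rw [hKdef] at hm
    have hmlt : (m : ℝ) < A / ν := Nat.lt_ceil.mp hm
    have hneg : -A + (m : ℝ) * ν < 0 := by
      have : (m : ℝ) * ν < A := (lt_div_iff₀ hν).mp hmlt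
      linarith
    rw [hS]
    rcases Nat.eq_zero_or_pos m with hm0 | hm1
    · left
      simp [hm0]
    · right
      rw [hNegdef]
      refine ⟨hneg, 1 + (N - 1) * m, N * m, 0, 0, Nat.le_add_right 1 _,
        Nat.mul_pos (by omega) hm1, le_of_eq (by ring), ?_⟩
      push_cast [hNsub]
      rw [hνdef]
      ring
  have hKcard : ((fun m : ℕ => -A + (m : ℝ) * ν) ''
      ((Finset.range K : Finset ℕ) : Set ℕ)).ncard = K := by
    rw [Set.ncard_image_of_injOn, Set.ncard_coe_finset, Finset.card_range]
    intro a _ b _ hab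
    simp only at hab
    have h1 : (a : ℝ) * ν = (b : ℝ) * ν := by linarith
    have h2 : (a : ℝ) = (b : ℝ) := mul_right_cancel₀ hν.ne' h1
    exact_mod_cast h2
  have hScard_ge : K ≤ (negHomogSet N d ρ κ).ncard := by
    rw [← hKcard]
    exact Set.ncard_le_ncard himg hSfin
  -- put everything together
  have hcard : (Nat.card (negHomogSet N d ρ κ) : ℝ) = ((negHomogSet N d ρ κ).ncard : ℝ) := by
    rw [Nat.card_coe_set_eq]
  constructor
  · -- lower bound
    have h1 : A / ν ≤ (K : ℝ) := by rw [hKdef]; exact Nat.le_ceil _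
    have h2 : A₀ / ν₀ ≤ A / ν := by
      have hAA : A₀ ≤ A := by rw [hAA₀]; linarith
      have hνν : ν ≤ ν₀ := by
        have h := mul_nonneg (by linarith : (0:ℝ) ≤ (N:ℝ)-1) hκ.le
        rw [hνν₀]; linarith
      exact div_le_div₀ hA.le hAA hν hνν
    have h3 : (K : ℝ) ≤ ((negHomogSet N d ρ κ).ncard : ℝ) := by exact_mod_cast hScard_ge
    have hLHS : (ρ + (d : ℝ)) / ((N : ℝ) + 1)
        * (ρ - (d : ℝ) * ((N : ℝ) - 1) / ((N : ℝ) + 1))⁻¹ = A₀ / ν₀ := by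
      rw [← hβdef, hν₀β, hA₀def]
      have hβ0 : β ≠ 0 := ne_of_gt hβ
      have hn0 : ((N:ℝ)+1) ≠ 0 := ne_of_gt hn1pos
      field_simp
    rw [hcard, hLHS]
    linarith
  · -- upper bound
    have h1 : ((negHomogSet N d ρ κ).ncard : ℝ) ≤ 1 + (M : ℝ) * (d : ℝ) := by
      exact_mod_cast hScard_le
    have h2 : (M : ℝ) * (d : ℝ) ≤ (N : ℝ) * A₀ / ν₀ * (d : ℝ) :=
      mul_le_mul_of_nonneg_right hMle (by positivity)
    have hRHS : (ρ + (d : ℝ)) * (d : ℝ) * (N : ℝ) / ((N : ℝ) + 1)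
        * (ρ - (d : ℝ) * ((N : ℝ) - 1) / ((N : ℝ) + 1))⁻¹
        = (N : ℝ) * A₀ / ν₀ * (d : ℝ) := by
      rw [← hβdef, hν₀β, hA₀def]
      have hβ0 : β ≠ 0 := ne_of_gt hβ
      have hn0 : ((N:ℝ)+1) ≠ 0 := ne_of_gt hn1pos
      have hν₀0 : ((N:ℝ)+1)*β/2 ≠ 0 := by positivity
      field_simp
    rw [hcard, hRHS]
    linarith
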